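/- arXiv:2505.23126 — 2 statements merged into one kernel-verified Lean document; each statement's English description precedes it below -/
import Mathlib

section
/- Completion feeding is sound: Let p_i be the rewrite rule s_i → t_i with s_i nonempty, and let s_j be a string. Suppose there exists a nonempty string o that is simultaneously a suffix of t_i and a prefix of s_j, say t_i = u ++ o and s_j = o ++ v, and suppose s_j is not a substring of s_i ++ v. Then applying p_i to the string s_i ++ v produces a string containing s_j as a substring, i.e., p_i feeds the rule with left-hand side s_j. -/
/-- Apply the rewrite rule `s → t` (Python `str.replace` semantics: leftmost,
non-overlapping replacement of all occurrences), with fuel. -/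
def applyRuleAux (s t : List Char) : Nat → List Char → List Char
  | 0, u => u
  | _+1, [] => []
  | n+1, c :: cs =>
    if s.isPrefixOf (c :: cs) then t ++ applyRuleAux s t n ((c :: cs).drop s.length)
    else c :: applyRuleAux s t n cs

/-- Apply the rewrite rule `s → t` to the string `u`. -/
def applyRule (s t u : List Char) : List Char :=
  applyRuleAux s t u.length u

/-- A rewrite rule, as a pair (LHS, RHS). -/
abbrev Rule := List Char × List Char

/-- Apply a cascade of rewrite rules in order. -/
def applyCascade (c : List Rule) (u : List Char) : List Char :=
  c.foldl (fun v p => applyRule p.1 p.2 v) u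

/-- `feeds (s_p → t_p) (with LHS s_q)`: some string gains an occurrence of `s_q`. -/
def Feeds (sp tp sq : List Char) : Prop :=
  ∃ u : List Char, sq <:+: applyRule sp tp u ∧ ¬ sq <:+: u

/-- `bleeds (s_p → t_p) (with LHS s_q)`: some occurrence of `s_q` is destroyed. -/
def Bleeds (sp tp sq : List Char) : Prop :=
  ∃ u : List Char, sq <:+: u ∧ ¬ sq <:+: applyRule sp tp u


lemma applyRuleAux_no_occ (s t : List Char) (hs : s ≠ []) :
    ∀ (n : Nat) (w : List Char), ¬ s <:+: w → applyRuleAux s t n w = w := by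
  intro n
  induction n with
  | zero => intro w _; rfl
  | succ n ih =>
    intro w hw
    cases w with
    | nil => rfl
    | cons c cs =>
      have hnp : ¬ s.isPrefixOf (c :: cs) := by
        intro h
        exact hw (List.isPrefixOf_iff_prefix.mp h).isInfix
      simp only [applyRuleAux]
      rw [if_neg hnp, ih cs (fun h => hw (h.trans (List.infix_cons_iff.mpr (Or.inr (List.infix_refl cs)))))]

/-- Completion feeding is sound. -/
theorem completion_feeding (si ti sj u o v : List Char)
    (hsi : si ≠ []) (ho : o ≠ [])
    (hti : ti = u ++ o) (hsj : sj = o ++ v)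
    (hnotsub : ¬ sj <:+: (si ++ v))
    (huniq : ∀ w₁ w₂ : List Char, si ++ v = w₁ ++ si ++ w₂ → w₁ = []) :
    sj <:+: applyRule si ti (si ++ v) := by
  have hnv : ¬ si <:+: v := by
    rintro ⟨a, b, rfl⟩
    have := huniq (si ++ a) b (by simp)
    simp [hsi] at this
  obtain ⟨c, s', rfl⟩ := List.exists_cons_of_ne_nil hsi
  have hstep : applyRule (c :: s') ti ((c :: s') ++ v) =
      ti ++ applyRuleAux (c :: s') ti (s' ++ v).length v := by
    have hpref : (c :: s').isPrefixOf (c :: (s' ++ v)) = true :=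
      List.isPrefixOf_iff_prefix.mpr ⟨v, by simp⟩
    show applyRuleAux (c :: s') ti ((c :: s') ++ v).length ((c :: s') ++ v) = _
    have hlen : ((c :: s') ++ v).length = (s' ++ v).length + 1 := by simp
    rw [hlen]
    show applyRuleAux (c :: s') ti ((s' ++ v).length + 1) (c :: (s' ++ v)) = _
    simp only [applyRuleAux]
    rw [if_pos hpref]
    congr 1
    simp only [List.length_cons, List.drop_succ_cons, List.drop_left]
  rw [hstep, applyRuleAux_no_occ _ _ hsi _ _ hnv, hti, hsj]
  exact ⟨u, [], by simp⟩
end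

section
/- Containment feeding is sound: let p_i = (s_i → t_i) with s_i nonempty and t_i nonempty, and let s_j be a string such that t_i is a substring of s_j, t_i is not a substring of s_i, and moreover s_j can be written as w ++ t_i ++ x where s_j is not a substring of w ++ s_i ++ x. Then applying p_i to u := w ++ s_i ++ x yields a string containing s_j (provided the only occurrence of s_i in u is the designated one), so p_i feeds the rule with left-hand side s_j. -/
lemma applyRuleAux_of_not_infix (s t : List Char) :
    ∀ (n : Nat) (x : List Char), ¬ s <:+: x → applyRuleAux s t n x = x := by
  intro n
  induction n with
  | zero => intro x _; rfl
  | succ n ih =>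
    intro x hx
    cases x with
    | nil => rfl
    | cons c cs =>
      rw [applyRuleAux]
      have hpre : ¬ s.isPrefixOf (c :: cs) := by
        intro h
        exact hx ((List.isPrefixOf_iff_prefix.mp h).isInfix)
      rw [if_neg hpre]
      have : ¬ s <:+: cs := fun h => hx (h.trans (List.suffix_cons c cs).isInfix)
      rw [ih cs this]

lemma applyRuleAux_key (si ti x : List Char) (hsi : si ≠ [])
    (hx : ¬ si <:+: x) :
    ∀ (w : List Char) (n : Nat), (w ++ si ++ x).length ≤ n →
      (∀ w₁ w₂ : List Char, w ++ si ++ x = w₁ ++ si ++ w₂ → w₁ = w) →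
      applyRuleAux si ti n (w ++ si ++ x) = w ++ ti ++ x := by
  intro w
  induction w with
  | nil =>
    intro n hn huniq
    obtain ⟨c, si', rfl⟩ : ∃ c si', si = c :: si' := by
      cases si with
      | nil => exact absurd rfl hsi
      | cons c si' => exact ⟨c, si', rfl⟩
    obtain ⟨m, rfl⟩ : ∃ m, n = m + 1 := by
      cases n with
      | zero => simp [List.length_append] at hn
      | succ m => exact ⟨m, rfl⟩
    simp only [List.nil_append, List.cons_append]
    rw [applyRuleAux]
    have hpre : (c :: si').isPrefixOf (c :: (si' ++ x)) :=
      List.isPrefixOf_iff_prefix.mpr ⟨x, by simp⟩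
    rw [if_pos hpre]
    have hdrop : (c :: (si' ++ x)).drop (c :: si').length = x := by
      have : (c :: (si' ++ x)) = (c :: si') ++ x := by simp
      rw [this, List.drop_left]
    rw [hdrop, applyRuleAux_of_not_infix _ _ _ _ hx]
  | cons c w' ih =>
    intro n hn huniq
    obtain ⟨m, rfl⟩ : ∃ m, n = m + 1 := by
      cases n with
      | zero => simp [List.length_append] at hn
      | succ m => exact ⟨m, rfl⟩
    have heq : (c :: w') ++ si ++ x = c :: (w' ++ si ++ x) := by simp
    rw [heq, applyRuleAux]
    have hpre : ¬ si.isPrefixOf (c :: (w' ++ si ++ x)) := by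
      intro h
      obtain ⟨r, hr⟩ := List.isPrefixOf_iff_prefix.mp h
      have : (c :: w') ++ si ++ x = [] ++ si ++ r := by
        simp only [List.nil_append]; rw [heq, ← hr]
      have := huniq [] r this
      simp at this
    rw [if_neg hpre]
    have huniq' : ∀ w₁ w₂ : List Char, w' ++ si ++ x = w₁ ++ si ++ w₂ → w₁ = w' := by
      intro w₁ w₂ h
      have : (c :: w') ++ si ++ x = (c :: w₁) ++ si ++ w₂ := by simp [h]
      have := huniq (c :: w₁) w₂ this
      simpa using this
    have hm : (w' ++ si ++ x).length ≤ m := by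
      rw [heq] at hn; simpa using Nat.le_of_succ_le_succ hn
    rw [ih m hm huniq']
    simp

/-- Containment feeding is sound. -/
theorem containment_feeding (si ti sj w x : List Char)
    (hsi : si ≠ []) (hti : ti ≠ [])
    (hsub : ti <:+: sj) (hnsub : ¬ ti <:+: si)
    (hsplit : sj = w ++ ti ++ x)
    (hnotin : ¬ sj <:+: (w ++ si ++ x))
    (huniq : ∀ w₁ w₂ : List Char, w ++ si ++ x = w₁ ++ si ++ w₂ → w₁ = w) :
    sj <:+: applyRule si ti (w ++ si ++ x) ∧ ¬ sj <:+: (w ++ si ++ x) := by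
  have hx : ¬ si <:+: x := by
    rintro ⟨a, b, rfl⟩
    have := huniq (w ++ si ++ a) b (by simp [List.append_assoc])
    have h2 := congrArg List.length this
    simp only [List.length_append] at h2
    have : si.length = 0 := by omega
    exact hsi (List.eq_nil_of_length_eq_zero this)
  refine ⟨?_, hnotin⟩
  rw [applyRule, applyRuleAux_key si ti x hsi hx w _ le_rfl huniq, hsplit]
end
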